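/- Suppose T : X → X is bounded with ⟨Im(T)x, x⟩ ≤ 0 for all x, and Re(T) = C + K with C self-adjoint coercive and K compact. If the null space N of Re(T) is finite dimensional and ⟨Im(T)x, x⟩ < 0 for all nonzero x ∈ N, then T is injective. -/

import Mathlib

/-!
If `T x = 0` then `⟪T x, x⟫ = ⟪T† x, x⟫ = 0`, so `x` is a zero of the quadratic form of the
positive operator `-ℑ T`. Writing `-ℑ T = S²` with `S` its square root, this says `S x = 0`, hence
`ℑ T x = 0`, i.e. `T† x = 0`. Then `ℜ T x = 0` as well, so `x` lies in the null space of `ℜ T`,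
where `⟪ℑ T x, x⟫ = 0` is only possible for `x = 0`.
-/

open ContinuousLinearMap
open scoped InnerProductSpace ComplexStarModule

namespace ContinuousLinearMap

variable {X : Type*} [NormedAddCommGroup X] [InnerProductSpace ℂ X] [CompleteSpace X]

theorem IsPositive.apply_eq_zero_of_re_inner_eq_zero {A : X →L[ℂ] X} (hA : A.IsPositive)
    {x : X} (hx : (⟪A x, x⟫_ℂ).re = 0) : A x = 0 := by
  have hA₀ : 0 ≤ A := (nonneg_iff_isPositive A).mpr hA
  set S := CFC.sqrt A
  have hSA : A x = S (S x) := by rw [← CFC.sqrt_mul_sqrt_self A]; rfl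
  have hSx : S x = 0 := by
    have hS : IsSelfAdjoint S := (CFC.sqrt_nonneg A).isSelfAdjoint
    have hnorm : ‖S x‖ ^ 2 = (⟪A x, x⟫_ℂ).re := by
      rw [hSA, ← adjoint_inner_right, hS.adjoint_eq]
      exact (inner_self_eq_norm_sq (𝕜 := ℂ) _).symm
    simpa [hx] using hnorm
  rw [hSA, hSx, map_zero]

theorem coe_realPart_eq (T : X →L[ℂ] X) :
    (ℜ T : X →L[ℂ] X) = (1 / 2 : ℂ) • (T + adjoint T) := by
  rw [realPart_apply_coe, star_eq_adjoint, ← Complex.coe_smul]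
  norm_num

theorem coe_imaginaryPart_eq (T : X →L[ℂ] X) :
    (ℑ T : X →L[ℂ] X) = (1 / (2 * Complex.I)) • (T - adjoint T) := by
  rw [imaginaryPart_apply_coe, star_eq_adjoint, ← Complex.coe_smul, smul_smul]
  congr 1
  field_simp
  norm_num

theorem adjoint_apply_eq_zero_of_imaginaryPart_nonpos {T : X →L[ℂ] X}
    (hT : ∀ y, (⟪(ℑ T : X →L[ℂ] X) y, y⟫_ℂ).re ≤ 0) {x : X} (hx : T x = 0) :
    adjoint T x = 0 := by
  have hpos : (-(ℑ T : X →L[ℂ] X)).IsPositive :=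
    isPositive_def'.mpr ⟨(ℑ T).prop.neg, fun y => by simpa [reApplyInnerSelf] using hT y⟩
  have hzero : (⟪(-(ℑ T : X →L[ℂ] X)) x, x⟫_ℂ).re = 0 := by
    have hadj : ⟪adjoint T x, x⟫_ℂ = 0 := by rw [adjoint_inner_left, hx, inner_zero_right]
    simp [coe_imaginaryPart_eq, hx, inner_smul_left, hadj]
  simpa [coe_imaginaryPart_eq, hx] using hpos.apply_eq_zero_of_re_inner_eq_zero hzero

end ContinuousLinearMap

theorem stmt11_general {X : Type*} [NormedAddCommGroup X] [InnerProductSpace ℂ X] [CompleteSpace X]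
    (T : X →L[ℂ] X)
    (hImT : ∀ x : X, (⟪((1 / (2 * Complex.I)) • (T - adjoint T)) x, x⟫_ℂ).re ≤ 0)
    (hstrict : ∀ x : X, ((1 / 2 : ℂ) • (T + adjoint T)) x = 0 → x ≠ 0 →
      (⟪((1 / (2 * Complex.I)) • (T - adjoint T)) x, x⟫_ℂ).re < 0) :
    Function.Injective T := by
  rw [← coe_imaginaryPart_eq, ← coe_realPart_eq] at hstrict
  rw [← coe_imaginaryPart_eq] at hImT
  refine (injective_iff_map_eq_zero T).mpr fun x hx => ?_
  by_contra hx₀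
  have hadj : adjoint T x = 0 := adjoint_apply_eq_zero_of_imaginaryPart_nonpos hImT hx
  have hre : (ℜ T : X →L[ℂ] X) x = 0 := by simp [coe_realPart_eq, hx, hadj]
  have him : (ℑ T : X →L[ℂ] X) x = 0 := by simp [coe_imaginaryPart_eq, hx, hadj]
  simpa [him] using hstrict x hre hx₀

/-- If `Im(T) ≤ 0` on `X`, `Re(T) = C + K` with `C` self-adjoint coercive and
`K` compact, the null space `N` of `Re(T)` is finite dimensional and `⟨Im(T)x, x⟩ < 0` for all
nonzero `x ∈ N`, then `T` is injective. -/
theorem stmt11 {X : Type*} [NormedAddCommGroup X] [InnerProductSpace ℂ X] [CompleteSpace X]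
    (T C K : X →L[ℂ] X)
    (hImT : ∀ x : X, (⟪((1 / (2 * Complex.I)) • (T - adjoint T)) x, x⟫_ℂ).re ≤ 0)
    (hReT : (1 / 2 : ℂ) • (T + adjoint T) = C + K)
    (hCsa : IsSelfAdjoint C) (c : ℝ) (hc : 0 < c)
    (hCcoer : ∀ x : X, c * ‖x‖ ^ 2 ≤ (⟪C x, x⟫_ℂ).re)
    (hK : IsCompactOperator K)
    (hN : FiniteDimensional ℂ (LinearMap.ker (((1 / 2 : ℂ) • (T + adjoint T) : X →L[ℂ] X) : X →ₗ[ℂ] X)))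
    (hstrict : ∀ x : X, ((1 / 2 : ℂ) • (T + adjoint T)) x = 0 → x ≠ 0 →
      (⟪((1 / (2 * Complex.I)) • (T - adjoint T)) x, x⟫_ℂ).re < 0) :
    Function.Injective T :=
  stmt11_general T hImT hstrict
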